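/- For every real r > 0 there exists a constant C_r > 0 such that for every integer a ≥ 8 and every real number x with 1 ≤ x ≤ a^r, the number of triples of integers (m, w, o) with w ≥ 1, m ≥ ⌊−(a+1)·w/(a² + 3a + 3)⌋ + 2, o ≥ ⌊(a+2)·w/(a² + 3a + 3)⌋ + 2 and Nm(m − w·ρ + o·ρ²) ≤ x is at most C_r·(log a)²·x/a². -/

import Mathlib

/-!
Write `D = a² + 3a + 3`. Since `f_a` has no integer root it is irreducible, so the three
embeddings of `K` send `ρ` to the real roots `x₀ > x₂ > x₁` of `f_a` and
`Nm(m - wρ + oρ²) = ∏ᵢ (m - w xᵢ + o xᵢ²)`. Put `d = m - ⌊-(a+1)w/D⌋ - 1` and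
`c = o - ⌊(a+2)w/D⌋ - 1`, both `≥ 1` on the counted set. Each factor is at least
`d + c xᵢ² + w g(xᵢ)/D` with `g(x) = (a+2)x² - Dx - (a+1)`, and since `g(x₀), g(x₂) ≥ 0` and
`g(x₁) ≥ D`, the three factors are at least `c a²`, `w` and `d`. Hence `d w c ≤ x / a²`. As
`(m, w, o) ↦ (d, w, c)` is injective, the count is at most the number of positive triples with
product at most `T = x / a²`, which is `≤ T (1 + log⁺ T)²` by summing the harmonic series twice.
-/

open NumberField

/-- The largest real root of `X³ - aX² - (a+3)X - 1` (for `a ≥ 7` this set of real roots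
is nonempty and bounded above, so `sSup` picks out the largest root). -/
noncomputable def simplestCubicRoot (a : ℤ) : ℝ :=
  sSup {x : ℝ | x ^ 3 - (a : ℝ) * x ^ 2 - ((a : ℝ) + 3) * x - 1 = 0}

open Polynomial Finset Real

noncomputable def simplestCubic (a : ℤ) : ℤ[X] := X ^ 3 - C a * X ^ 2 - C (a + 3) * X - 1

namespace simplestCubic

theorem aeval_eq {R : Type*} [CommRing R] (a : ℤ) (y : R) :
    aeval y (simplestCubic a) = y ^ 3 - a * y ^ 2 - (a + 3) * y - 1 := by
  simp [simplestCubic, map_ofNat]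

theorem monic (a : ℤ) : (simplestCubic a).Monic := by
  unfold simplestCubic; monicity!

theorem natDegree_eq (a : ℤ) : (simplestCubic a).natDegree = 3 := by
  unfold simplestCubic; compute_degree!

theorem irreducible_map (a : ℤ) : Irreducible ((simplestCubic a).map (algebraMap ℤ ℚ)) := by
  have hdeg : ((simplestCubic a).map (algebraMap ℤ ℚ)).natDegree = 3 :=
    ((monic a).natDegree_map _).trans (natDegree_eq a)
  rw [irreducible_iff_roots_eq_zero_of_degree_le_three (by omega) (by omega),
    Multiset.eq_zero_iff_forall_notMem]
  intro z hz
  have hroot : aeval z (simplestCubic a) = 0 := by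
    rwa [mem_roots ((monic a).map _).ne_zero, IsRoot, eval_map_algebraMap] at hz
  obtain ⟨n, rfl⟩ := isInteger_of_is_root_of_monic (monic a) hroot
  rw [aeval_algebraMap_apply, map_eq_zero_iff _ (algebraMap ℤ ℚ).injective_int, aeval_eq] at hroot
  -- an integer root divides the constant term `1`
  have hunit : IsUnit n :=
    IsUnit.of_mul_eq_one (n ^ 2 - a * n - (a + 3)) (by linear_combination hroot)
  rcases Int.isUnit_iff.1 hunit with rfl | rfl <;> omega

theorem finrank_eq_three {a : ℤ} {K : Type*} [Field K] [NumberField K] {ρ : K}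
    (hρ : aeval ρ (simplestCubic a) = 0) (hgen : IntermediateField.adjoin ℚ {ρ} = ⊤) :
    Module.finrank ℚ K = 3 := by
  have hρ' : aeval ρ ((simplestCubic a).map (algebraMap ℤ ℚ)) = 0 := by
    rwa [aeval_map_algebraMap]
  have hmin := minpoly.eq_of_irreducible_of_monic (irreducible_map a) hρ' ((monic a).map _)
  rw [← IntermediateField.finrank_top', ← hgen,
    IntermediateField.adjoin.finrank (IsIntegral.of_finite ℚ ρ), ← hmin,
    (monic a).natDegree_map, natDegree_eq]

end simplestCubic

theorem algebraMap_norm_eq_prod {K : Type*} [Field K] [NumberField K] {ρ α : K}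
    (hgen : IntermediateField.adjoin ℚ {ρ} = ⊤) {T : Finset ℂ}
    (hcard : #T = Module.finrank ℚ K) (hmem : ∀ φ : K →ₐ[ℚ] ℂ, φ ρ ∈ T) {F : ℂ → ℂ}
    (hF : ∀ φ : K →ₐ[ℚ] ℂ, φ α = F (φ ρ)) :
    algebraMap ℚ ℂ (Algebra.norm ℚ α) = ∏ z ∈ T, F z := by
  classical
  have hinj : Function.Injective fun φ : K →ₐ[ℚ] ℂ ↦ φ ρ := fun φ ψ h ↦
    AlgHom.ext_of_adjoin_eq_top
      (Algebra.adjoin_eq_top_of_primitive_element (IsAlgebraic.of_finite ℚ ρ) hgen)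
      (fun x hx ↦ (Set.mem_singleton_iff.1 hx) ▸ h)
  have himage : univ.image (fun φ : K →ₐ[ℚ] ℂ ↦ φ ρ) = T :=
    eq_of_subset_of_card_le (by simpa [subset_iff] using hmem)
      (by rw [card_image_of_injective _ hinj, card_univ, AlgHom.card, hcard])
  rw [Algebra.norm_eq_prod_embeddings, ← himage, prod_image (fun φ _ ψ _ h ↦ hinj h)]
  exact prod_congr rfl fun φ _ ↦ hF φ

theorem cubic_eq_mul_of_roots {F : Type*} [Field F] {b c d x₀ x₁ x₂ : F}
    (h₀₁ : x₀ ≠ x₁) (h₀₂ : x₀ ≠ x₂) (h₁₂ : x₁ ≠ x₂)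
    (h₀ : x₀ ^ 3 - b * x₀ ^ 2 - c * x₀ - d = 0) (h₁ : x₁ ^ 3 - b * x₁ ^ 2 - c * x₁ - d = 0)
    (h₂ : x₂ ^ 3 - b * x₂ ^ 2 - c * x₂ - d = 0) (y : F) :
    y ^ 3 - b * y ^ 2 - c * y - d = (y - x₀) * (y - x₁) * (y - x₂) := by
  have q₁ : x₀ ^ 2 + x₀ * x₁ + x₁ ^ 2 - b * (x₀ + x₁) - c = 0 :=
    (mul_eq_zero.1 (by linear_combination h₀ - h₁ : (x₀ - x₁) * _ = 0)).resolve_left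
      (sub_ne_zero.2 h₀₁)
  have q₂ : x₀ ^ 2 + x₀ * x₂ + x₂ ^ 2 - b * (x₀ + x₂) - c = 0 :=
    (mul_eq_zero.1 (by linear_combination h₀ - h₂ : (x₀ - x₂) * _ = 0)).resolve_left
      (sub_ne_zero.2 h₀₂)
  have e₁ : x₀ + x₁ + x₂ - b = 0 :=
    (mul_eq_zero.1 (by linear_combination q₁ - q₂ : (x₁ - x₂) * _ = 0)).resolve_left
      (sub_ne_zero.2 h₁₂)
  linear_combination h₀ + (y - x₀) * (y - x₁) * e₁ + (y - x₀) * q₁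

theorem add_le_sub_mul_add_mul_sq {A D m w o d c x : ℝ} (hD : D ≠ 0) (hm : -(A + 1) * w / D + d ≤ m)
    (ho : (A + 2) * w / D + c ≤ o) :
    d + c * x ^ 2 + w * ((A + 2) * x ^ 2 - D * x - (A + 1)) / D ≤ m - w * x + o * x ^ 2 := by
  have : d + c * x ^ 2 + w * ((A + 2) * x ^ 2 - D * x - (A + 1)) / D
      = (-(A + 1) * w / D + d) - w * x + ((A + 2) * w / D + c) * x ^ 2 := by
    field_simp; ring
  rw [this]
  nlinarith [mul_le_mul_of_nonneg_right ho (sq_nonneg x)]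

theorem card_le_div_of_mul_le (N n : ℕ) (hn : 0 < n) :
    (#{c ∈ Icc 1 N | n * c ≤ N} : ℝ) ≤ N / n := by
  calc (#{c ∈ Icc 1 N | n * c ≤ N} : ℝ) ≤ #(Icc 1 (N / n)) := by
        gcongr
        intro c hc
        simp only [mem_filter, mem_Icc] at hc ⊢
        exact ⟨hc.1.1, (Nat.le_div_iff_mul_le hn).2 (by linarith [hc.2])⟩
    _ = ((N / n : ℕ) : ℝ) := by simp
    _ ≤ N / n := Nat.cast_div_le

theorem card_triples_mul_le (N : ℕ) :
    (#{p ∈ Icc 1 N ×ˢ Icc 1 N ×ˢ Icc 1 N | p.1 * p.2.1 * p.2.2 ≤ N} : ℝ) ≤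
      N * harmonic N ^ 2 := by
  calc (#{p ∈ Icc 1 N ×ˢ Icc 1 N ×ˢ Icc 1 N | p.1 * p.2.1 * p.2.2 ≤ N} : ℝ)
      = ∑ d ∈ Icc 1 N, ∑ e ∈ Icc 1 N, (#{c ∈ Icc 1 N | d * e * c ≤ N} : ℝ) := by
        simp only [card_filter, sum_product, Nat.cast_sum]
    _ ≤ ∑ d ∈ Icc 1 N, ∑ e ∈ Icc 1 N, (N : ℝ) / (d * e : ℕ) := by
        gcongr with d hd e he
        exact card_le_div_of_mul_le N _ (Nat.mul_pos (mem_Icc.1 hd).1 (mem_Icc.1 he).1)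
    _ = N * harmonic N ^ 2 := by
        simp only [harmonic_eq_sum_Icc, Rat.cast_sum, Rat.cast_inv, Rat.cast_natCast]
        rw [sq, sum_mul_sum, mul_sum]
        exact sum_congr rfl fun d _ ↦ by
          rw [mul_sum]; exact sum_congr rfl fun e _ ↦ by push_cast; ring

def posTriplesWithProdLE (T : ℝ) : Set (ℤ × ℤ × ℤ) :=
  {p | 0 < p.1 ∧ 0 < p.2.1 ∧ 0 < p.2.2 ∧ ((p.1 * p.2.1 * p.2.2 : ℤ) : ℝ) ≤ T}

theorem posTriplesWithProdLE_subset (T : ℝ) :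
    posTriplesWithProdLE T ⊆
      ({p ∈ Icc 1 ⌊T⌋₊ ×ˢ Icc 1 ⌊T⌋₊ ×ˢ Icc 1 ⌊T⌋₊ | p.1 * p.2.1 * p.2.2 ≤ ⌊T⌋₊}.image
        fun p ↦ ((p.1 : ℤ), (p.2.1 : ℤ), (p.2.2 : ℤ)) : Finset (ℤ × ℤ × ℤ)) := by
  rintro ⟨d, e, c⟩ ⟨hd, he, hc, hprod⟩
  lift d to ℕ using hd.le
  lift e to ℕ using he.le
  lift c to ℕ using hc.le
  have hN : d * e * c ≤ ⌊T⌋₊ := Nat.le_floor (by exact_mod_cast hprod)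
  simp only [Nat.cast_pos] at hd he hc
  refine mem_image.2 ⟨(d, e, c), mem_filter.2 ⟨?_, hN⟩, rfl⟩
  simp only [mem_product, mem_Icc]
  refine ⟨⟨hd, ?_⟩, ⟨he, ?_⟩, ⟨hc, ?_⟩⟩ <;> nlinarith [Nat.mul_pos hd he, Nat.mul_pos he hc]

theorem finite_posTriplesWithProdLE (T : ℝ) : (posTriplesWithProdLE T).Finite :=
  (finite_toSet _).subset (posTriplesWithProdLE_subset T)

theorem ncard_posTriplesWithProdLE_le {T : ℝ} (hT : 0 ≤ T) :
    ((posTriplesWithProdLE T).ncard : ℝ) ≤ T * (1 + log⁺ T) ^ 2 := by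
  set N := ⌊T⌋₊
  have hlog : log N ≤ log⁺ T :=
    log_of_nat_eq_posLog ▸ posLog_le_posLog (Nat.cast_nonneg N) (Nat.floor_le hT)
  calc ((posTriplesWithProdLE T).ncard : ℝ)
      ≤ #{p ∈ Icc 1 N ×ˢ Icc 1 N ×ˢ Icc 1 N | p.1 * p.2.1 * p.2.2 ≤ N} := by
        exact_mod_cast (Set.ncard_le_ncard (posTriplesWithProdLE_subset T) (finite_toSet _)).trans
          ((Set.ncard_coe_finset _).trans_le card_image_le)
    _ ≤ N * harmonic N ^ 2 := card_triples_mul_le N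
    _ ≤ T * (1 + log⁺ T) ^ 2 := by
        have : (0 : ℝ) ≤ harmonic N := by rw [harmonic]; positivity
        gcongr
        · exact Nat.floor_le hT
        · linarith [harmonic_le_one_add_log N]

noncomputable def floorShift (A : ℝ) (t : ℤ × ℤ × ℤ) : ℤ × ℤ × ℤ :=
  (t.1 - ⌊-(A + 1) * t.2.1 / (A ^ 2 + 3 * A + 3)⌋ - 1, t.2.1,
    t.2.2 - ⌊(A + 2) * t.2.1 / (A ^ 2 + 3 * A + 3)⌋ - 1)

theorem floorShift_injective (A : ℝ) : Function.Injective (floorShift A) := by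
  rintro ⟨m, w, o⟩ ⟨m', w', o'⟩ h
  simp only [floorShift, Prod.mk.injEq] at h
  obtain ⟨h₁, rfl, h₃⟩ := h
  exact Prod.ext (by simpa using h₁) (Prod.ext rfl (by simpa using h₃))

/-- The upper bound on `x₂` has to be sharp: `x₂ = -1/(1 + x₀)` lies within `O(A⁻⁴)` of the
negative root of `(A+2)x² - (A²+3A+3)x - (A+1)`. It is `-1/(1 + y)` for `y = A + 1 + 2/(A + 5/4)`,
which separates `x₀ ≈ A + 1 + 2/(A + 3/2)` from the preimage of that root under `y ↦ -1/(1 + y)`. -/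
structure SimplestCubicRoots (A : ℝ) where
  x₀ : ℝ
  x₁ : ℝ
  x₂ : ℝ
  lt_x₀ : A + 1 + 2 / (A + 2) < x₀
  x₁_lt : x₁ < -1
  neg_half_lt_x₂ : -1 / 2 < x₂
  x₂_lt : x₂ < -(4 * A + 5) / (4 * A ^ 2 + 13 * A + 18)
  isRoot_x₀ : x₀ ^ 3 - A * x₀ ^ 2 - (A + 3) * x₀ - 1 = 0
  isRoot_x₁ : x₁ ^ 3 - A * x₁ ^ 2 - (A + 3) * x₁ - 1 = 0
  isRoot_x₂ : x₂ ^ 3 - A * x₂ ^ 2 - (A + 3) * x₂ - 1 = 0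

namespace SimplestCubicRoots

theorem nonempty {A : ℝ} (hA : 2 ≤ A) : Nonempty (SimplestCubicRoots A) := by
  let f : ℝ → ℝ := fun y ↦ y ^ 3 - A * y ^ 2 - (A + 3) * y - 1
  have hf : ContinuousOn f Set.univ := by fun_prop
  have hpos : 0 < A + 2 := by linarith
  have hq : 0 < 4 * A ^ 2 + 13 * A + 18 := by positivity
  obtain ⟨x₀, ⟨hx₀, -⟩, h₀⟩ : ∃ x ∈ Set.Ioo (A + 1 + 2 / (A + 2)) (A + 2), f x = 0 := by
    have : 2 / (A + 2) ≤ 1 := by rw [div_le_one hpos]; linarith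
    refine intermediate_value_Ioo (by linarith) (hf.mono (Set.subset_univ _))
      ⟨?_, by simp only [f]; nlinarith⟩
    have : f (A + 1 + 2 / (A + 2)) = -(A ^ 3 + 2 * A ^ 2 - 8) / (A + 2) ^ 3 := by
      simp only [f]; field_simp; ring
    rw [this]
    exact div_neg_of_neg_of_pos (by nlinarith) (by positivity)
  obtain ⟨x₁, ⟨-, hx₁⟩, h₁⟩ : ∃ x ∈ Set.Ioo (-3 / 2 : ℝ) (-1), f x = 0 :=
    intermediate_value_Ioo (by norm_num) (hf.mono (Set.subset_univ _))
      ⟨by simp only [f]; linarith, by simp only [f]; linarith⟩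
  obtain ⟨x₂, ⟨hx₂, hx₂'⟩, h₂⟩ :
      ∃ x ∈ Set.Ioo (-1 / 2 : ℝ) (-(4 * A + 5) / (4 * A ^ 2 + 13 * A + 18)), f x = 0 := by
    refine intermediate_value_Ioo' ?_ (hf.mono (Set.subset_univ _))
      ⟨?_, by simp only [f]; linarith⟩
    · rw [le_div_iff₀ hq]; nlinarith
    · have : f (-(4 * A + 5) / (4 * A ^ 2 + 13 * A + 18)) =
          -(32 * A ^ 3 + 352 * A ^ 2 + 858 * A + 1097) / (4 * A ^ 2 + 13 * A + 18) ^ 3 := by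
        simp only [f]; field_simp; ring
      rw [this]
      exact div_neg_of_neg_of_pos (by nlinarith) (by positivity)
  exact ⟨⟨x₀, x₁, x₂, hx₀, hx₁, hx₂, hx₂', h₀, h₁, h₂⟩⟩

section

variable {A : ℝ} (R : SimplestCubicRoots A)

theorem x₁_lt_x₂ : R.x₁ < R.x₂ := by linarith [R.x₁_lt, R.neg_half_lt_x₂]

theorem x₂_lt_x₀ (hA : 0 ≤ A) : R.x₂ < R.x₀ := by
  have : R.x₂ < 0 := R.x₂_lt.trans (div_neg_of_neg_of_pos (by linarith) (by positivity))
  have : 0 ≤ 2 / (A + 2) := by positivity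
  linarith [R.lt_x₀]

theorem eq_mul (hA : 0 ≤ A) {F : Type*} [Field F] (φ : ℝ →+* F) (y : F) :
    y ^ 3 - φ A * y ^ 2 - (φ A + 3) * y - 1 = (y - φ R.x₀) * (y - φ R.x₁) * (y - φ R.x₂) := by
  have hφ (x : ℝ) (hx : x ^ 3 - A * x ^ 2 - (A + 3) * x - 1 = 0) :
      φ x ^ 3 - φ A * φ x ^ 2 - (φ A + 3) * φ x - 1 = 0 := by
    simpa [map_ofNat] using congrArg φ hx
  exact cubic_eq_mul_of_roots (φ.injective.ne (R.x₁_lt_x₂.trans (R.x₂_lt_x₀ hA)).ne')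
    (φ.injective.ne (R.x₂_lt_x₀ hA).ne') (φ.injective.ne R.x₁_lt_x₂.ne)
    (hφ _ R.isRoot_x₀) (hφ _ R.isRoot_x₁) (hφ _ R.isRoot_x₂) y

variable {m w o d c : ℝ}

theorem le_factor₀ (hA : 0 ≤ A) (hw : 0 ≤ w) (hd : 0 ≤ d) (hc : 0 ≤ c)
    (hm : -(A + 1) * w / (A ^ 2 + 3 * A + 3) + d ≤ m)
    (ho : (A + 2) * w / (A ^ 2 + 3 * A + 3) + c ≤ o) :
    c * A ^ 2 ≤ m - w * R.x₀ + o * R.x₀ ^ 2 := by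
  have hpos : 0 < A + 2 := by linarith
  have hD : 0 < A ^ 2 + 3 * A + 3 := by positivity
  have hx₀ : 2 < (R.x₀ - (A + 1)) * (A + 2) := (div_lt_iff₀ hpos).1 (by linarith [R.lt_x₀])
  have hg : 0 ≤ (A + 2) * R.x₀ ^ 2 - (A ^ 2 + 3 * A + 3) * R.x₀ - (A + 1) :=
    (mul_nonneg_iff_of_pos_left hpos).1 (by nlinarith)
  have : c * A ^ 2 ≤ c * R.x₀ ^ 2 := by gcongr; nlinarith
  have := add_le_sub_mul_add_mul_sq (x := R.x₀) hD.ne' hm ho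
  have : 0 ≤ w * ((A + 2) * R.x₀ ^ 2 - (A ^ 2 + 3 * A + 3) * R.x₀ - (A + 1)) /
      (A ^ 2 + 3 * A + 3) := by positivity
  linarith

theorem le_factor₁ (hA : 0 ≤ A) (hw : 0 ≤ w) (hd : 0 ≤ d) (hc : 0 ≤ c)
    (hm : -(A + 1) * w / (A ^ 2 + 3 * A + 3) + d ≤ m)
    (ho : (A + 2) * w / (A ^ 2 + 3 * A + 3) + c ≤ o) :
    w ≤ m - w * R.x₁ + o * R.x₁ ^ 2 := by
  have hD : 0 < A ^ 2 + 3 * A + 3 := by positivity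
  have hx₁ := R.x₁_lt
  have hg : A ^ 2 + 3 * A + 3 ≤ (A + 2) * R.x₁ ^ 2 - (A ^ 2 + 3 * A + 3) * R.x₁ - (A + 1) := by
    nlinarith [mul_nonneg (by linarith : 0 ≤ A + 2) (by nlinarith : 0 ≤ R.x₁ ^ 2 - 1)]
  have := add_le_sub_mul_add_mul_sq (x := R.x₁) hD.ne' hm ho
  have : w ≤ w * ((A + 2) * R.x₁ ^ 2 - (A ^ 2 + 3 * A + 3) * R.x₁ - (A + 1)) /
      (A ^ 2 + 3 * A + 3) := by
    rw [le_div_iff₀ hD]; exact mul_le_mul_of_nonneg_left hg hw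
  nlinarith [mul_nonneg hc (sq_nonneg R.x₁)]

theorem le_factor₂ (hA : 2 ≤ A) (hw : 0 ≤ w) (hc : 0 ≤ c)
    (hm : -(A + 1) * w / (A ^ 2 + 3 * A + 3) + d ≤ m)
    (ho : (A + 2) * w / (A ^ 2 + 3 * A + 3) + c ≤ o) :
    d ≤ m - w * R.x₂ + o * R.x₂ ^ 2 := by
  have hD : 0 < A ^ 2 + 3 * A + 3 := by positivity
  set τ := -(4 * A + 5) / (4 * A ^ 2 + 13 * A + 18) with hτ
  have hτ₀ : τ < 0 := div_neg_of_neg_of_pos (by linarith) (by positivity)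
  have hgτ : (A + 2) * τ ^ 2 - (A ^ 2 + 3 * A + 3) * τ - (A + 1) =
      (8 * A ^ 2 - 6 * A - 4) / (4 * A ^ 2 + 13 * A + 18) ^ 2 := by
    rw [hτ]; field_simp; ring
  have : 0 ≤ (8 * A ^ 2 - 6 * A - 4) / (4 * A ^ 2 + 13 * A + 18) ^ 2 :=
    div_nonneg (by nlinarith) (by positivity)
  have hx₂ : R.x₂ < τ := R.x₂_lt
  -- the quadratic is decreasing on `(-∞, 0]`
  have hg : 0 ≤ (A + 2) * R.x₂ ^ 2 - (A ^ 2 + 3 * A + 3) * R.x₂ - (A + 1) := by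
    nlinarith [mul_pos (sub_pos.2 hx₂)
      (by nlinarith : 0 < (A ^ 2 + 3 * A + 3) - (A + 2) * (R.x₂ + τ))]
  have := add_le_sub_mul_add_mul_sq (x := R.x₂) hD.ne' hm ho
  have : 0 ≤ w * ((A + 2) * R.x₂ ^ 2 - (A ^ 2 + 3 * A + 3) * R.x₂ - (A + 1)) /
      (A ^ 2 + 3 * A + 3) := by positivity
  nlinarith [mul_nonneg hc (sq_nonneg R.x₂)]

theorem mul_le_factors (hA : 2 ≤ A) (hw : 0 ≤ w) (hd : 0 ≤ d) (hc : 0 ≤ c)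
    (hm : -(A + 1) * w / (A ^ 2 + 3 * A + 3) + d ≤ m)
    (ho : (A + 2) * w / (A ^ 2 + 3 * A + 3) + c ≤ o) :
    d * w * c * A ^ 2 ≤
      (m - w * R.x₀ + o * R.x₀ ^ 2) * (m - w * R.x₁ + o * R.x₁ ^ 2) *
        (m - w * R.x₂ + o * R.x₂ ^ 2) := by
  have h₀ := R.le_factor₀ (by linarith) hw hd hc hm ho
  have h₁ := R.le_factor₁ (by linarith) hw hd hc hm ho
  have h₂ := R.le_factor₂ hA hw hc hm ho
  have h₀' := (by positivity : 0 ≤ c * A ^ 2).trans h₀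
  calc d * w * c * A ^ 2 = c * A ^ 2 * w * d := by ring
    _ ≤ _ := mul_le_mul (mul_le_mul h₀ h₁ hw h₀') h₂ hd (mul_nonneg h₀' (hw.trans h₁))

theorem floorShift_mem_posTriplesWithProdLE (hA : 2 ≤ A) {t : ℤ × ℤ × ℤ} (hw : 1 ≤ t.2.1)
    (hm : ⌊-(A + 1) * t.2.1 / (A ^ 2 + 3 * A + 3)⌋ + 2 ≤ t.1)
    (ho : ⌊(A + 2) * t.2.1 / (A ^ 2 + 3 * A + 3)⌋ + 2 ≤ t.2.2) {x : ℝ}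
    (hx : (t.1 - t.2.1 * R.x₀ + t.2.2 * R.x₀ ^ 2) * (t.1 - t.2.1 * R.x₁ + t.2.2 * R.x₁ ^ 2) *
      (t.1 - t.2.1 * R.x₂ + t.2.2 * R.x₂ ^ 2) ≤ x) :
    floorShift A t ∈ posTriplesWithProdLE (x / A ^ 2) := by
  obtain ⟨m, w, o⟩ := t
  dsimp only at hw hm ho hx ⊢
  have hα := Int.lt_floor_add_one (-(A + 1) * w / (A ^ 2 + 3 * A + 3))
  have hβ := Int.lt_floor_add_one ((A + 2) * w / (A ^ 2 + 3 * A + 3))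
  have hm' : (2 : ℝ) ≤ m - ⌊-(A + 1) * w / (A ^ 2 + 3 * A + 3)⌋ := by
    exact_mod_cast (le_sub_iff_add_le'.2 hm)
  have ho' : (2 : ℝ) ≤ o - ⌊(A + 2) * w / (A ^ 2 + 3 * A + 3)⌋ := by
    exact_mod_cast (le_sub_iff_add_le'.2 ho)
  refine ⟨by dsimp [floorShift]; omega, by dsimp [floorShift]; omega, by dsimp [floorShift]; omega, ?_⟩
  rw [le_div_iff₀ (by positivity)]
  push_cast [floorShift]
  exact (R.mul_le_factors hA (by exact_mod_cast (zero_le_one.trans hw)) (by linarith)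
    (by linarith) (by linarith) (by linarith)).trans hx

end

theorem simplestCubicRoot_eq {a : ℤ} (ha : 0 ≤ a) (R : SimplestCubicRoots a) :
    simplestCubicRoot a = R.x₀ := by
  have ha' : (0 : ℝ) ≤ a := by exact_mod_cast ha
  refine IsGreatest.csSup_eq ⟨R.isRoot_x₀, fun y (hy : _ = 0) ↦ ?_⟩
  have := R.eq_mul ha' (RingHom.id ℝ) y
  simp only [RingHom.id_apply] at this
  rcases mul_eq_zero.1 (this ▸ hy) with hy | hy
  · rcases mul_eq_zero.1 hy with hy | hy
    · exact (sub_eq_zero.1 hy).le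
    · exact (sub_eq_zero.1 hy).le.trans (R.x₁_lt_x₂.trans (R.x₂_lt_x₀ ha')).le
  · exact (sub_eq_zero.1 hy).le.trans (R.x₂_lt_x₀ ha').le

theorem norm_eq {a : ℤ} (ha : 0 ≤ a) (R : SimplestCubicRoots a) {K : Type*} [Field K]
    [NumberField K] {ρ : K} (hρ : aeval ρ (simplestCubic a) = 0)
    (hgen : IntermediateField.adjoin ℚ {ρ} = ⊤) (m w o : ℤ) :
    ((Algebra.norm ℚ ((m : K) - w * ρ + o * ρ ^ 2) : ℚ) : ℝ) =
      (m - w * R.x₀ + o * R.x₀ ^ 2) * (m - w * R.x₁ + o * R.x₁ ^ 2) *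
        (m - w * R.x₂ + o * R.x₂ ^ 2) := by
  have ha' : (0 : ℝ) ≤ a := by exact_mod_cast ha
  have h₀₁ : (R.x₀ : ℂ) ≠ R.x₁ := by exact_mod_cast (R.x₁_lt_x₂.trans (R.x₂_lt_x₀ ha')).ne'
  have h₀₂ : (R.x₀ : ℂ) ≠ R.x₂ := by exact_mod_cast (R.x₂_lt_x₀ ha').ne'
  have h₁₂ : (R.x₁ : ℂ) ≠ R.x₂ := by exact_mod_cast R.x₁_lt_x₂.ne
  have hmem (φ : K →ₐ[ℚ] ℂ) : φ ρ ∈ ({(R.x₀ : ℂ), (R.x₁ : ℂ), (R.x₂ : ℂ)} : Finset ℂ) := by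
    have hφ : φ ρ ^ 3 - a * φ ρ ^ 2 - (a + 3) * φ ρ - 1 = 0 := by
      simpa [simplestCubic.aeval_eq, map_ofNat] using congrArg φ hρ
    have := R.eq_mul ha' Complex.ofRealHom (φ ρ)
    simp only [Complex.ofRealHom_eq_coe, Complex.ofReal_intCast] at this
    rcases mul_eq_zero.1 (this ▸ hφ) with h | h
    · rcases mul_eq_zero.1 h with h | h <;> simp [sub_eq_zero.1 h]
    · simp [sub_eq_zero.1 h]
  apply Complex.ofReal_injective
  rw [Complex.ofReal_ratCast, ← eq_ratCast (algebraMap ℚ ℂ),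
    algebraMap_norm_eq_prod hgen (T := {(R.x₀ : ℂ), (R.x₁ : ℂ), (R.x₂ : ℂ)})
      ((card_eq_three.2 ⟨_, _, _, h₀₁, h₀₂, h₁₂, rfl⟩).trans
        (simplestCubic.finrank_eq_three hρ hgen).symm)
      hmem (F := fun z ↦ m - w * z + o * z ^ 2) (fun φ ↦ by simp),
    prod_insert (by simp [h₀₁, h₀₂]), prod_insert (by simp [h₁₂]), prod_singleton]
  push_cast
  ring

end SimplestCubicRoots

theorem one_add_posLog_div_sq_le {a r x : ℝ} (ha : exp 1 ≤ a) (hr : 0 ≤ r) (hx : 0 ≤ x)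
    (hxr : x ≤ a ^ r) : 1 + log⁺ (x / a ^ 2) ≤ (r + 1) * log a := by
  have ha₁ : 1 ≤ a := (one_le_exp zero_le_one).trans ha
  have hlog : 1 ≤ log a := (le_log_iff_exp_le (by linarith)).2 ha
  have har : log⁺ (a ^ r) = r * log a := by
    rw [posLog_eq_log (by rw [abs_of_pos (by positivity)]; exact one_le_rpow ha₁ hr),
      log_rpow (by linarith)]
  have : log⁺ (x / a ^ 2) ≤ r * log a :=
    har ▸ posLog_le_posLog (by positivity) ((div_le_self hx (one_le_pow₀ ha₁)).trans hxr)
  linarith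

theorem stmt_14 :
    ∀ r : ℝ, 0 < r →
    ∃ C : ℝ, 0 < C ∧
      ∀ (a : ℤ), 8 ≤ a →
      ∀ (K : Type) [Field K] [NumberField K] (σ : K →+* ℝ) (ρK : K),
        σ ρK = simplestCubicRoot a →
        IntermediateField.adjoin ℚ {ρK} = ⊤ →
        ∀ x : ℝ, 1 ≤ x → x ≤ (a : ℝ) ^ r →
          (Set.ncard {t : ℤ × ℤ × ℤ | 1 ≤ t.2.1 ∧
              ⌊(-((a : ℝ) + 1) * t.2.1) / ((a : ℝ) ^ 2 + 3 * a + 3)⌋ + 2 ≤ t.1 ∧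
              ⌊(((a : ℝ) + 2) * t.2.1) / ((a : ℝ) ^ 2 + 3 * a + 3)⌋ + 2 ≤ t.2.2 ∧
              ((Algebra.norm ℚ ((t.1 : K) - (t.2.1 : K) * ρK + (t.2.2 : K) * ρK ^ 2) : ℚ) : ℝ)
                ≤ x} : ℝ) ≤
            C * (Real.log a) ^ 2 * x / (a : ℝ) ^ 2 := by
  intro r hr
  refine ⟨(r + 1) ^ 2, by positivity, ?_⟩
  intro a ha K _ _ σ ρK hσ hgen x hx hxr
  have hA : (8 : ℝ) ≤ a := by exact_mod_cast ha
  obtain ⟨R⟩ := SimplestCubicRoots.nonempty (A := a) (by linarith)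
  have hρ : aeval ρK (simplestCubic a) = 0 := by
    apply σ.injective
    simpa [simplestCubic.aeval_eq, map_ofNat, hσ, R.simplestCubicRoot_eq (by omega)] using
      R.isRoot_x₀
  set T := x / (a : ℝ) ^ 2
  have hlogT : 1 + log⁺ T ≤ (r + 1) * log a :=
    one_add_posLog_div_sq_le (by linarith [exp_one_lt_d9]) hr.le (by linarith) hxr
  calc _ ≤ ((posTriplesWithProdLE T).ncard : ℝ) := by
        refine Nat.cast_le.2 (Set.ncard_le_ncard_of_injOn (floorShift a) ?_
          (floorShift_injective a).injOn (finite_posTriplesWithProdLE T))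
        rintro t ⟨hw, hm, ho, hnorm⟩
        exact R.floorShift_mem_posTriplesWithProdLE (by linarith) hw hm ho
          (R.norm_eq (by omega) hρ hgen t.1 t.2.1 t.2.2 ▸ hnorm)
    _ ≤ T * (1 + log⁺ T) ^ 2 := ncard_posTriplesWithProdLE_le (by positivity)
    _ ≤ T * ((r + 1) * log a) ^ 2 := by gcongr; exact add_nonneg zero_le_one posLog_nonneg
    _ = (r + 1) ^ 2 * log a ^ 2 * x / a ^ 2 := by ring
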